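/- arXiv:2310.09823 — 2 statements merged into one kernel-verified Lean document; each statement's English description precedes it below -/
import Mathlib

section
/- For every even integer N ≥ 2 and every a > 0, one has ∫₀^∞ e^{−a t²} H_N(t) dt = (√π/2) · (N!/(N/2)!) · a^{−(N+1)/2} · (1−a)^{N/2}. -/
open Real MeasureTheory

/-- Physicists' Hermite polynomials: `H 0 = 1`, `H (n+1) x = 2x H n x - (H n)'(x)`. -/
noncomputable def physHermite : ℕ → ℝ → ℝ
  | 0 => fun _ => 1
  | n + 1 => fun x => 2 * x * physHermite n x - deriv (physHermite n) x

/-!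
Put `I n = ∫ H_n(x) e^{-a x²} dx` over the whole line. Since `H_{n+1}' = 2(n+1) H_n`, Gaussian
integration by parts `∫ p' e^{-a x²} = 2a ∫ x p e^{-a x²}` together with the three-term recurrence
`H_{n+2} = 2x H_{n+1} - 2(n+1) H_n` gives `I (n+2) = 2(n+1)(1-a)/a · I n`, and the Gaussian integral
`I 0 = √(π/a)` starts the induction. For even `N` the integrand is even, so the half-line integral
is `I N / 2`.
-/

open Polynomial Set

noncomputable def physHermitePoly : ℕ → ℝ[X]
  | 0 => 1
  | n + 1 => 2 * X * physHermitePoly n - derivative (physHermitePoly n)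

lemma physHermitePoly_succ (n : ℕ) :
    physHermitePoly (n + 1) = 2 * X * physHermitePoly n - derivative (physHermitePoly n) := rfl

lemma physHermite_eq_eval (n : ℕ) : physHermite n = fun x => (physHermitePoly n).eval x := by
  induction n with
  | zero => funext x; simp [physHermite, physHermitePoly]
  | succ n ih =>
    funext x
    simp [physHermite, physHermitePoly_succ, ih]

lemma derivative_physHermitePoly_succ (n : ℕ) :
    derivative (physHermitePoly (n + 1)) = (2 * (n + 1) : ℝ) • physHermitePoly n := by
  induction n with
  | zero => simp [physHermitePoly, smul_eq_C_mul, map_ofNat]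
  | succ n ih =>
    rw [physHermitePoly_succ (n + 1), derivative_sub, derivative_mul, ih, derivative_smul,
      physHermitePoly_succ n]
    simp only [derivative_mul, derivative_ofNat, derivative_X, smul_eq_C_mul, map_mul, map_add,
      map_natCast, map_ofNat, map_one]
    push_cast
    ring

lemma physHermitePoly_add_two (n : ℕ) :
    physHermitePoly (n + 2) =
      (2 : ℝ) • (X * physHermitePoly (n + 1)) - (2 * (n + 1) : ℝ) • physHermitePoly n := by
  rw [physHermitePoly_succ (n + 1), derivative_physHermitePoly_succ, two_smul, two_mul, add_mul]

lemma eval_neg_physHermitePoly : ∀ (n : ℕ) (x : ℝ),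
    (physHermitePoly n).eval (-x) = (-1) ^ n * (physHermitePoly n).eval x
  | 0, x => by simp [physHermitePoly]
  | 1, x => by simp [physHermitePoly]
  | n + 2, x => by
    simp only [physHermitePoly_add_two, eval_sub, eval_smul, eval_mul, eval_X,
      eval_neg_physHermitePoly (n + 1) x, eval_neg_physHermitePoly n x, smul_eq_mul]
    ring

lemma integrable_eval_mul_exp_neg_mul_sq {b : ℝ} (hb : 0 < b) (p : ℝ[X]) :
    Integrable fun x : ℝ => p.eval x * exp (-b * x ^ 2) := by
  induction p using Polynomial.induction_on' with
  | add p q hp hq => simpa [add_mul, Pi.add_def] using hp.add hq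
  | monomial n c =>
    have hn : (-1 : ℝ) < n := neg_one_lt_zero.trans_le n.cast_nonneg
    simpa [mul_assoc] using (integrable_rpow_mul_exp_neg_mul_sq hb hn).const_mul c

-- `hb` is part of the data because additivity needs integrability.
noncomputable def gaussianPairing (b : ℝ) (hb : 0 < b) : ℝ[X] →ₗ[ℝ] ℝ where
  toFun p := ∫ x, p.eval x * exp (-b * x ^ 2)
  map_add' p q := by
    simp only [eval_add, add_mul]
    exact integral_add (integrable_eval_mul_exp_neg_mul_sq hb p)
      (integrable_eval_mul_exp_neg_mul_sq hb q)
  map_smul' c p := by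
    simp only [eval_smul, smul_eq_mul, mul_assoc, integral_const_mul, RingHom.id_apply]

lemma gaussianPairing_apply {b : ℝ} (hb : 0 < b) (p : ℝ[X]) :
    gaussianPairing b hb p = ∫ x, p.eval x * exp (-b * x ^ 2) := rfl

lemma gaussianPairing_derivative {b : ℝ} (hb : 0 < b) (p : ℝ[X]) :
    gaussianPairing b hb (derivative p) = (2 * b) • gaussianPairing b hb (X * p) := by
  have hderiv (x : ℝ) : HasDerivAt (fun x => p.eval x * exp (-b * x ^ 2))
      ((derivative p - (2 * b) • (X * p)).eval x * exp (-b * x ^ 2)) x := by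
    refine ((p.hasDerivAt x).mul ((hasDerivAt_pow 2 x).const_mul (-b)).exp).congr_deriv ?_
    simp only [eval_sub, eval_smul, eval_mul, eval_X, smul_eq_mul]
    ring
  rw [← sub_eq_zero, ← map_smul, ← map_sub]
  exact integral_eq_zero_of_hasDerivAt_of_integrable hderiv
    (integrable_eval_mul_exp_neg_mul_sq hb _) (integrable_eval_mul_exp_neg_mul_sq hb p)

lemma gaussianPairing_physHermitePoly_add_two {a : ℝ} (ha : 0 < a) (n : ℕ) :
    gaussianPairing a ha (physHermitePoly (n + 2)) =
      2 * (n + 1) * (1 - a) / a * gaussianPairing a ha (physHermitePoly n) := by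
  have hX : gaussianPairing a ha (X * physHermitePoly (n + 1)) =
      (n + 1) / a * gaussianPairing a ha (physHermitePoly n) := by
    have h := gaussianPairing_derivative ha (physHermitePoly (n + 1))
    rw [derivative_physHermitePoly_succ, map_smul, smul_eq_mul, smul_eq_mul] at h
    rw [div_mul_eq_mul_div, eq_div_iff ha.ne']
    linarith
  rw [physHermitePoly_add_two, map_sub, map_smul, map_smul, hX, smul_eq_mul, smul_eq_mul]
  field_simp

lemma gaussianPairing_physHermitePoly_two_mul {a : ℝ} (ha : 0 < a) (m : ℕ) :
    gaussianPairing a ha (physHermitePoly (2 * m)) =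
      √π * ((2 * m).factorial / m.factorial : ℝ) * a ^ (-(2 * m + 1 : ℝ) / 2) * (1 - a) ^ m := by
  induction m with
  | zero =>
    rw [gaussianPairing_apply]
    simp only [physHermitePoly, eval_one, one_mul]
    rw [integral_gaussian, sqrt_div pi_pos.le, sqrt_eq_rpow a]
    norm_num [rpow_neg ha.le, div_eq_mul_inv]
  | succ m ih =>
    rw [show 2 * (m + 1) = 2 * m + 2 by ring, gaussianPairing_physHermitePoly_add_two, ih,
      show -(2 * ((m + 1 : ℕ) : ℝ) + 1) / 2 = -(2 * m + 1 : ℝ) / 2 + (-1) by push_cast; ring,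
      rpow_add ha, rpow_neg_one]
    push_cast [Nat.factorial_succ]
    field_simp
    ring

lemma setIntegral_Ioi_eq_half_integral_of_even {f : ℝ → ℝ} (hf : ∀ x, f (-x) = f x) :
    ∫ x in Ioi 0, f x = (∫ x, f x) / 2 := by
  have habs (x : ℝ) : f |x| = f x := by
    rcases abs_choice x with h | h <;> simp only [h, hf]
  have h := integral_comp_abs (f := f)
  simp_rw [habs] at h
  linarith

theorem integral_exp_mul_hermite_general (N : ℕ) (hNe : Even N) (a : ℝ) (ha : 0 < a) :
    ∫ t in Set.Ioi (0 : ℝ), Real.exp (-a * t ^ 2) * physHermite N t =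
      Real.sqrt π / 2 * ((Nat.factorial N : ℝ) / (Nat.factorial (N / 2) : ℝ)) *
        a ^ (-((N : ℝ) + 1) / 2) * (1 - a) ^ (N / 2) := by
  obtain ⟨m, rfl⟩ := hNe
  rw [← two_mul, Nat.mul_div_cancel_left m two_pos, setIntegral_Ioi_eq_half_integral_of_even]
  · rw [physHermite_eq_eval]
    simp_rw [mul_comm (exp _)]
    rw [← gaussianPairing_apply ha, gaussianPairing_physHermitePoly_two_mul]
    push_cast
    ring
  · intro x
    simp [physHermite_eq_eval, eval_neg_physHermitePoly, (even_two_mul m).neg_one_pow]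

theorem integral_exp_mul_hermite (N : ℕ) (hN : 2 ≤ N) (hNe : Even N) (a : ℝ) (ha : 0 < a) :
    ∫ t in Set.Ioi (0 : ℝ), Real.exp (-a * t ^ 2) * physHermite N t =
      Real.sqrt π / 2 * ((Nat.factorial N : ℝ) / (Nat.factorial (N / 2) : ℝ)) *
        a ^ (-((N : ℝ) + 1) / 2) * (1 - a) ^ (N / 2) :=
  integral_exp_mul_hermite_general N hNe a ha
end

section
/- For τ ∈ (0,1), the parameter λ_τ = ( −2τ(1+τ) log τ / (1−τ) )^{1/2} satisfies 2√τ < λ_τ < 1 + τ. -/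
/-!
Put `ℓ = -log τ > 0`, so that `λ_τ² = 2τ(1 + τ)ℓ / (1 - τ)`. The two bounds on `λ_τ` are the
classical estimates `2(1 - τ)/(1 + τ) < ℓ < (τ⁻¹ - τ)/2`: the left one is
`2x/(x + 2) < log (1 + x)` at `x = τ⁻¹ - 1`, the right one is `ℓ < sinh ℓ`.
-/

open Real

lemma two_mul_one_sub_div_one_add_lt_neg_log {x : ℝ} (hx0 : 0 < x) (hx1 : x < 1) :
    2 * (1 - x) / (1 + x) < -log x := by
  have key := lt_log_one_add_of_pos (x := x⁻¹ - 1) (sub_pos.mpr ((one_lt_inv₀ hx0).mpr hx1))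
  rw [add_sub_cancel, log_inv] at key
  convert key using 1
  have hden : 0 < x⁻¹ - 1 + 2 := by linarith [inv_pos.mpr hx0]
  rw [div_eq_div_iff (by positivity) hden.ne']
  field_simp
  ring

lemma neg_log_lt_inv_sub_div_two {x : ℝ} (hx0 : 0 < x) (hx1 : x < 1) :
    -log x < (x⁻¹ - x) / 2 := by
  have key := self_lt_sinh_iff.mpr (neg_pos.mpr (log_neg hx0 hx1))
  rwa [sinh_eq, neg_neg, exp_neg, exp_log hx0] at key

theorem lambda_tau_bounds (τ : ℝ) (hτ0 : 0 < τ) (hτ1 : τ < 1) :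
    2 * Real.sqrt τ < Real.sqrt (-2 * τ * (1 + τ) * Real.log τ / (1 - τ)) ∧
    Real.sqrt (-2 * τ * (1 + τ) * Real.log τ / (1 - τ)) < 1 + τ := by
  have h1sub : 0 < 1 - τ := sub_pos.mpr hτ1
  have h1add : 0 < 1 + τ := by positivity
  have hlower : 2 * (1 - τ) < -log τ * (1 + τ) :=
    (div_lt_iff₀ h1add).mp (two_mul_one_sub_div_one_add_lt_neg_log hτ0 hτ1)
  have hupper : -log τ * (2 * τ) < 1 - τ ^ 2 := by
    have := neg_log_lt_inv_sub_div_two hτ0 hτ1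
    rw [show (τ⁻¹ - τ) / 2 = (1 - τ ^ 2) / (2 * τ) by field_simp] at this
    exact (lt_div_iff₀ (by positivity)).mp this
  constructor
  · rw [lt_sqrt (by positivity), mul_pow, sq_sqrt hτ0.le, lt_div_iff₀ h1sub]
    nlinarith
  · rw [sqrt_lt' h1add, div_lt_iff₀ h1sub]
    nlinarith
end
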